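/- Let N ≥ 1, let x, y ∈ V_N ∖ ∂_v^int V_N, and let 0 < p_h < 1 and 0 < p_v < 1. Then τ^{f,N}_p(x,y) ≤ Σ_{γ ∈ Γ_{{x,y}}} λ_h^{|γ∩E^h|} · λ_v^{|γ∩E^v|} (Peierls bound). -/

import Mathlib

open MeasureTheory Filter

/-- An edge of the square lattice `ℤ × ℤ`, encoded by its lower-left endpoint `base`
together with its direction: a horizontal edge joins `base` to `base + (1,0)`,
a vertical edge joins `base` to `base + (0,1)`. This encodes exactly the set
`𝔼` of nearest-neighbour edges of `ℤ²`. -/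
structure LatticeEdge where
  base : ℤ × ℤ
  horiz : Bool
deriving DecidableEq

namespace LatticeEdge

/-- First endpoint of an edge. -/
def fst (e : LatticeEdge) : ℤ × ℤ := e.base

/-- Second endpoint of an edge. -/
def snd (e : LatticeEdge) : ℤ × ℤ :=
  if e.horiz then (e.base.1 + 1, e.base.2) else (e.base.1, e.base.2 + 1)

/-- The two endpoints of an edge, as an unordered pair. -/
def ends (e : LatticeEdge) : Sym2 (ℤ × ℤ) := s(e.fst, e.snd)

end LatticeEdge

/-- The graph on `ℤ²` whose edges are the lattice edges belonging to `S`. -/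
def graphOf (S : Set LatticeEdge) : SimpleGraph (ℤ × ℤ) where
  Adj u v := u ≠ v ∧ ∃ e ∈ S, e.ends = s(u, v)
  symm := by
    constructor
    intro u v h
    obtain ⟨hne, e, he, hs⟩ := h
    exact ⟨hne.symm, e, he, hs.trans (Sym2.eq_swap)⟩
  loopless := by
    constructor
    intro u h
    exact h.1 rfl

/-- The graph `(ℤ², 𝔼 ∖ γ)` obtained by deleting the edges of `γ`. -/
def complGraph (γ : Finset LatticeEdge) : SimpleGraph (ℤ × ℤ) :=
  graphOf {e | e ∉ γ}

/-- A finite set `γ` of lattice edges is a *contour* if the graph `(ℤ², 𝔼 ∖ γ)` has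
exactly one finite connected component, and `γ` is minimal with this property:
for every `e ∈ γ`, the graph `(ℤ², 𝔼 ∖ (γ ∖ {e}))` has no finite connected component. -/
def IsContour (γ : Finset LatticeEdge) : Prop :=
  (∃! C : (complGraph γ).ConnectedComponent, C.supp.Finite) ∧
  ∀ e ∈ γ, ∀ C : (graphOf {f | f ∉ γ ∨ f = e}).ConnectedComponent, ¬ C.supp.Finite

/-- A contour `γ` *surrounds* a set `X ⊆ ℤ²` of vertices if `X` is contained in the
vertex set `I_γ` of the (unique) finite connected component of `(ℤ², 𝔼 ∖ γ)`. -/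
def Surrounds (γ : Finset LatticeEdge) (X : Set (ℤ × ℤ)) : Prop :=
  IsContour γ ∧ ∃ C : (complGraph γ).ConnectedComponent, C.supp.Finite ∧ X ⊆ C.supp

/-- `Γ^n_X` : the set of contours of cardinality `n` surrounding `X`. -/
def GammaN (X : Set (ℤ × ℤ)) (n : ℕ) : Set (Finset LatticeEdge) :=
  {γ | Surrounds γ X ∧ γ.card = n}

/-- `‖x‖ = 2(x₁ + x₂ + 2)`, the cardinality of a minimal contour surrounding `{0, x}`. -/
def normC (x : ℤ × ℤ) : ℕ := (2 * (x.1 + x.2 + 2)).toNat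

/-- `β_x` : the number of minimal contours surrounding `{0, x}`. -/
noncomputable def betaX (x : ℤ × ℤ) : ℕ := Nat.card ↥(GammaN {0, x} (normC x))

/-- Number of horizontal edges of `γ`, i.e. `|γ ∩ 𝔼ʰ|`. -/
def hCount (γ : Finset LatticeEdge) : ℕ := (γ.filter fun e => e.horiz = true).card

/-- Number of vertical edges of `γ`, i.e. `|γ ∩ 𝔼ᵛ|`. -/
def vCount (γ : Finset LatticeEdge) : ℕ := (γ.filter fun e => e.horiz = false).card

/-- The dual edge `e*` of a lattice edge `e`.  We identify the dual lattice
`ℤ² + (1/2, 1/2)` with `ℤ²` via `(a,b) ↦ (a + 1/2, b + 1/2)`; under this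
identification the dual edge crossing the horizontal edge `(a,b)–(a+1,b)` joins
`(a, b-1)` to `(a, b)` (a vertical dual edge), and the dual edge crossing the
vertical edge `(a,b)–(a,b+1)` joins `(a-1, b)` to `(a, b)` (a horizontal dual edge). -/
def dualEdge (e : LatticeEdge) : LatticeEdge :=
  if e.horiz then ⟨(e.base.1, e.base.2 - 1), false⟩ else ⟨(e.base.1 - 1, e.base.2), true⟩

/-- A finite set `S` of (dual) lattice edges is a *circuit* if it is the edge set of a
closed self-avoiding path: there are `n ≥ 3` distinct vertices `c 0, …, c (n-1)`,
cyclically consecutive ones being joined by an edge of `S`, and every edge of `S` arising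
this way. -/
def IsCircuit (S : Finset LatticeEdge) : Prop :=
  ∃ n : ℕ, 3 ≤ n ∧ ∃ c : ZMod n → ℤ × ℤ, Function.Injective c ∧
    (∀ i : ZMod n, ∃ e ∈ S, e.ends = s(c i, c (i + 1))) ∧
    (∀ e ∈ S, ∃ i : ZMod n, e.ends = s(c i, c (i + 1)))

/-- The dual edge `e_k*` joining `(k - 1/2, -1/2)` to `(k - 1/2, 1/2)`; in our
identification of the dual lattice with `ℤ²` this is the vertical dual edge with base
`(k-1, -1)`, i.e. the dual of the horizontal edge `(k-1, 0)–(k, 0)`. -/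
def ekStar (k : ℤ) : LatticeEdge := ⟨(k - 1, -1), false⟩

/-- The probability that the edge `e` is open: `p_h` for horizontal edges and `p_v`
for vertical ones. -/
noncomputable def edgeProb (ph pv : ℝ) (e : LatticeEdge) : ℝ := if e.horiz then ph else pv

/-- `P` is the Bernoulli product measure `P_{(p_h, p_v)}` on configurations
`ω ∈ {0,1}^𝔼` (encoded as `LatticeEdge → Bool`, `true` = open): it is a probability
measure and, for every finite set of edges, the states of those edges are independent
Bernoulli variables with the correct parameters.  These cylinder probabilities
characterize the product measure uniquely. -/
def IsBernoulliProduct (ph pv : ℝ) (P : Measure (LatticeEdge → Bool)) : Prop :=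
  IsProbabilityMeasure P ∧
    ∀ (F : Finset LatticeEdge) (σ : LatticeEdge → Bool),
      P {ω | ∀ e ∈ F, ω e = σ e} =
        ∏ e ∈ F, ENNReal.ofReal
          (if σ e then edgeProb ph pv e else 1 - edgeProb ph pv e)

/-- The graph of open edges of the configuration `ω`. -/
def openGraph (ω : LatticeEdge → Bool) : SimpleGraph (ℤ × ℤ) :=
  graphOf {e | ω e = true}

/-- `x` and `y` belong to the same finite open cluster of the configuration `ω`. -/
def SameFiniteCluster (ω : LatticeEdge → Bool) (x y : ℤ × ℤ) : Prop :=
  ∃ C : (openGraph ω).ConnectedComponent, x ∈ C.supp ∧ y ∈ C.supp ∧ C.supp.Finite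

/-- The truncated (finite) connectivity `τ^f_p(x,y)`: the probability that `x` and `y`
belong to the same finite open cluster. -/
noncomputable def tauF (P : Measure (LatticeEdge → Bool)) (x y : ℤ × ℤ) : ℝ :=
  (P {ω | SameFiniteCluster ω x y}).toReal

/-- The box `V_N = ([-N,N] × [-N,N]) ∩ ℤ²`. -/
def VN (N : ℕ) : Set (ℤ × ℤ) := {v | |v.1| ≤ (N : ℤ) ∧ |v.2| ≤ (N : ℤ)}

/-- The interior vertex boundary `∂_v^int V_N = {x ∈ V_N : d(x, ℤ² ∖ V_N) = 1}`. -/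
def intBdry (N : ℕ) : Set (ℤ × ℤ) :=
  {v | (|v.1| ≤ (N : ℤ) ∧ |v.2| ≤ (N : ℤ)) ∧ (|v.1| = (N : ℤ) ∨ |v.2| = (N : ℤ))}

/-- `e ∈ E_N`: both endpoints of `e` lie in `V_N`. -/
def edgeInBox (N : ℕ) (e : LatticeEdge) : Prop := e.fst ∈ VN N ∧ e.snd ∈ VN N

/-- The graph on `(V_N, open edges of E_N)` (vertices outside `V_N` are isolated). -/
def openGraphN (N : ℕ) (ω : LatticeEdge → Bool) : SimpleGraph (ℤ × ℤ) :=
  graphOf {e | edgeInBox N e ∧ ω e = true}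

/-- The finite-volume event defining `τ^{f,N}_p(x,y)`: there is an open cluster `A` of
`(V_N, open edges of E_N)` with `{x,y} ⊆ V_A` and `V_A ∩ ∂_v^int V_N = ∅`. -/
def FiniteVolEvent (N : ℕ) (x y : ℤ × ℤ) (ω : LatticeEdge → Bool) : Prop :=
  ∃ C : (openGraphN N ω).ConnectedComponent,
    x ∈ C.supp ∧ y ∈ C.supp ∧ C.supp ∩ intBdry N = ∅

/-- The finite-volume finite connectivity `τ^{f,N}_p(x,y)`. -/
noncomputable def tauFN (P : Measure (LatticeEdge → Bool)) (N : ℕ) (x y : ℤ × ℤ) : ℝ :=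
  (P {ω | FiniteVolEvent N x y ω}).toReal

/-- `λ = (1-p)/p`. -/
noncomputable def lam (p : ℝ) : ℝ := (1 - p) / p

/-- The threshold `η̃(p_h, x₁, x₂)` from the paper. -/
noncomputable def etaTilde (ph : ℝ) (x1 x2 : ℤ) : ℝ :=
  ((betaX (x1, x2) : ℝ) * ph ^ (4 * (x1 + x2 + 2)) /
      ((4 ^ 3 * lam ph) ^ (x1 + x2 + 3) / (1 - 4 ^ 3 * lam ph) +
        (betaX (x1, x2) : ℝ) * (1 + 12 * lam ph) ^ (2 * (x1 + x2 + 2)))) ^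
    (1 / (2 * ((x2 : ℝ) - (x1 : ℝ))))

/-!
On the event, `x` and `y` lie in an open cluster `A` of `V_N` avoiding `∂_v^int V_N`, a finite
lattice-connected set. Let `W` be the unbounded component of `ℤ² ∖ A` and `γ` the set of edges
between `A` and `W`. Deleting `γ` leaves the finite component `ℤ² ∖ W ⊇ A` and the connected
infinite rest `W`, and every edge of `γ` joins the two, so `γ` is a contour surrounding `{x, y}`.
An edge of `γ` leaves `A` from a vertex off `∂_v^int V_N`, so it lies in `E_N` and must be closed.
Hence the event is covered by the events "all edges of `γ` are closed", `γ ∈ Γ_{x,y}`, of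
probability `(1-p_h)^{|γ∩Eʰ|} (1-p_v)^{|γ∩Eᵛ|} ≤ λ_h^{|γ∩Eʰ|} λ_v^{|γ∩Eᵛ|}`, and a union bound
concludes.
-/

lemma mem_VN_diff_intBdry {v : ℤ × ℤ} {N : ℕ} :
    v ∈ VN N \ intBdry N ↔ |v.1| < N ∧ |v.2| < N := by
  simp only [VN, intBdry, Set.mem_sdiff, Set.mem_ofPred_eq]
  constructor
  · rintro ⟨⟨h1, h2⟩, h⟩
    exact ⟨h1.lt_of_ne fun h' => h ⟨⟨h1, h2⟩, .inl h'⟩, h2.lt_of_ne fun h' => h ⟨⟨h1, h2⟩, .inr h'⟩⟩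
  · rintro ⟨h1, h2⟩
    exact ⟨⟨h1.le, h2.le⟩, fun ⟨_, h⟩ => h.elim h1.ne h2.ne⟩

lemma finite_VN (M : ℕ) : (VN M).Finite :=
  ((Set.finite_Icc (-(M : ℤ)) M).prod (Set.finite_Icc (-(M : ℤ)) M)).subset
    fun _ hv => ⟨abs_le.mp hv.1, abs_le.mp hv.2⟩

lemma exists_subset_VN {A : Set (ℤ × ℤ)} (hA : A.Finite) : ∃ M : ℕ, A ⊆ VN M := by
  obtain ⟨M, hM⟩ := (hA.image fun v => (max |v.1| |v.2|).toNat).bddAbove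
  refine ⟨M, fun v hv => ?_⟩
  have hv : (max |v.1| |v.2|).toNat ≤ M := hM ⟨v, hv, rfl⟩
  have := le_max_left |v.1| |v.2|
  have := le_max_right |v.1| |v.2|
  exact ⟨by omega, by omega⟩

namespace LatticeEdge

instance : Countable LatticeEdge :=
  Function.Injective.countable (f := fun e : LatticeEdge => (e.base, e.horiz))
    fun a b h => by cases a; cases b; simpa using h

lemma fst_ne_snd (e : LatticeEdge) : e.fst ≠ e.snd := by
  unfold fst snd
  rcases e.horiz <;> simp [Prod.ext_iff]

lemma snd_eq (e : LatticeEdge) :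
    (e.snd.1 = e.fst.1 + 1 ∧ e.snd.2 = e.fst.2) ∨ (e.snd.1 = e.fst.1 ∧ e.snd.2 = e.fst.2 + 1) := by
  unfold fst snd
  rcases e.horiz <;> simp

lemma ends_eq_iff {e : LatticeEdge} {u v : ℤ × ℤ} :
    e.ends = s(u, v) ↔ (e.fst = u ∧ e.snd = v) ∨ (e.fst = v ∧ e.snd = u) :=
  Sym2.eq_iff

lemma mem_VN_succ {e : LatticeEdge} {M : ℕ} (h : e.fst ∈ VN M ∨ e.snd ∈ VN M) :
    e.fst ∈ VN (M + 1) ∧ e.snd ∈ VN (M + 1) := by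
  simp only [VN, Set.mem_ofPred_eq, abs_le] at h ⊢
  rcases e.snd_eq with h' | h' <;> omega

lemma edgeInBox_of_mem {e : LatticeEdge} {N : ℕ}
    (h : e.fst ∈ VN N \ intBdry N ∨ e.snd ∈ VN N \ intBdry N) : edgeInBox N e := by
  rw [mem_VN_diff_intBdry, mem_VN_diff_intBdry] at h
  simp only [edgeInBox, VN, Set.mem_ofPred_eq, abs_le, abs_lt] at h ⊢
  rcases e.snd_eq with h' | h' <;> omega

lemma finite_setOf_touching {A : Set (ℤ × ℤ)} (hA : A.Finite) :
    {e : LatticeEdge | e.fst ∈ A ∨ e.snd ∈ A}.Finite := by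
  obtain ⟨M, hAM⟩ := exists_subset_VN hA
  refine (((finite_VN (M + 1)).prod (Set.finite_univ (α := Bool))).image
    fun p => mk p.1 p.2).subset fun e he => ⟨(e.base, e.horiz), ⟨?_, trivial⟩, rfl⟩
  exact (mem_VN_succ (he.imp (@hAM _) (@hAM _))).1

end LatticeEdge

section graphOf

variable {S T : Set LatticeEdge} {e : LatticeEdge} {u v : ℤ × ℤ}

lemma graphOf_mono (h : S ⊆ T) : graphOf S ≤ graphOf T :=
  fun _ _ ⟨hne, e, he, hends⟩ => ⟨hne, e, h he, hends⟩

lemma graphOf_adj_of_ends (he : e ∈ S) (h : e.ends = s(u, v)) : (graphOf S).Adj u v := by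
  refine ⟨?_, e, he, h⟩
  rcases LatticeEdge.ends_eq_iff.mp h with ⟨rfl, rfl⟩ | ⟨rfl, rfl⟩
  · exact e.fst_ne_snd
  · exact e.fst_ne_snd.symm

lemma exists_of_graphOf_adj (h : (graphOf S).Adj u v) :
    ∃ e ∈ S, (e.fst = u ∧ e.snd = v) ∨ (e.fst = v ∧ e.snd = u) :=
  let ⟨_, e, he, hends⟩ := h
  ⟨e, he, LatticeEdge.ends_eq_iff.mp hends⟩

end graphOf

lemma SimpleGraph.Reachable.mem_of_adj_mem {V : Type*} {G : SimpleGraph V} {S : Set V}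
    (hS : ∀ u v, u ∈ S → G.Adj u v → v ∈ S) {u v : V} (h : G.Reachable u v) (hu : u ∈ S) :
    v ∈ S := by
  obtain ⟨p⟩ := h
  induction p with
  | nil => exact hu
  | cons huw _ ih => exact ih (hS _ _ hu huw)

def latticeOn (S : Set (ℤ × ℤ)) : SimpleGraph (ℤ × ℤ) :=
  graphOf {e | e.fst ∈ S ∧ e.snd ∈ S}

section latticeOn

variable {S T : Set (ℤ × ℤ)} {u v : ℤ × ℤ}

lemma latticeOn_mono (h : S ⊆ T) : latticeOn S ≤ latticeOn T :=
  graphOf_mono fun _ he => ⟨h he.1, h he.2⟩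

lemma graphOf_le_latticeOn_univ (E : Set LatticeEdge) : graphOf E ≤ latticeOn Set.univ :=
  graphOf_mono fun _ _ => ⟨trivial, trivial⟩

lemma latticeOn_le_complGraph {γ : Finset LatticeEdge} (hγ : ∀ e ∈ γ, e.fst ∉ S ∨ e.snd ∉ S) :
    latticeOn S ≤ complGraph γ :=
  graphOf_mono fun e he heγ => (hγ e heγ).elim (· he.1) (· he.2)

lemma mem_of_latticeOn_adj (h : (latticeOn S).Adj u v) : u ∈ S ∧ v ∈ S := by
  obtain ⟨e, ⟨h1, h2⟩, ⟨rfl, rfl⟩ | ⟨rfl, rfl⟩⟩ := exists_of_graphOf_adj h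
  exacts [⟨h1, h2⟩, ⟨h2, h1⟩]

lemma latticeOn_adj_iff :
    (latticeOn S).Adj u v ↔ (latticeOn Set.univ).Adj u v ∧ u ∈ S ∧ v ∈ S := by
  refine ⟨fun h => ⟨latticeOn_mono (Set.subset_univ S) h, mem_of_latticeOn_adj h⟩, ?_⟩
  rintro ⟨⟨hne, e, -, hends⟩, hu, hv⟩
  refine ⟨hne, e, ?_, hends⟩
  rcases LatticeEdge.ends_eq_iff.mp hends with ⟨h1, h2⟩ | ⟨h1, h2⟩
  · exact ⟨h1 ▸ hu, h2 ▸ hv⟩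
  · exact ⟨h1 ▸ hv, h2 ▸ hu⟩

lemma mem_of_latticeOn_reachable (h : (latticeOn S).Reachable u v) (hu : u ∈ S) : v ∈ S :=
  h.mem_of_adj_mem (fun _ _ _ h => (mem_of_latticeOn_adj h).2) hu

lemma latticeOn_reachable_horizontal {a c b : ℤ} (h : ∀ t ∈ Set.uIcc a c, (t, b) ∈ S) :
    (latticeOn S).Reachable (a, b) (c, b) := by
  wlog hac : a ≤ c generalizing a c
  · exact (this (Set.uIcc_comm a c ▸ h) (le_of_not_ge hac)).symm
  rw [Set.uIcc_of_le hac] at h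
  induction c, hac using Int.leInduction with
  | base => rfl
  | succ c hac ih =>
    have hc : (c, b) ∈ S ∧ (c + 1, b) ∈ S := ⟨h c ⟨hac, by omega⟩, h (c + 1) ⟨by omega, le_rfl⟩⟩
    exact (ih fun t ht => h t ⟨ht.1, by linarith [ht.2]⟩).trans
      (graphOf_adj_of_ends (e := ⟨(c, b), true⟩) hc rfl).reachable

lemma latticeOn_reachable_vertical {a b d : ℤ} (h : ∀ t ∈ Set.uIcc b d, (a, t) ∈ S) :
    (latticeOn S).Reachable (a, b) (a, d) := by
  wlog hbd : b ≤ d generalizing b d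
  · exact (this (Set.uIcc_comm b d ▸ h) (le_of_not_ge hbd)).symm
  rw [Set.uIcc_of_le hbd] at h
  induction d, hbd using Int.leInduction with
  | base => rfl
  | succ d hbd ih =>
    have hd : (a, d) ∈ S ∧ (a, d + 1) ∈ S := ⟨h d ⟨hbd, by omega⟩, h (d + 1) ⟨by omega, le_rfl⟩⟩
    exact (ih fun t ht => h t ⟨ht.1, by linarith [ht.2]⟩).trans
      (graphOf_adj_of_ends (e := ⟨(a, d), false⟩) hd rfl).reachable

lemma latticeOn_univ_reachable (u v : ℤ × ℤ) : (latticeOn Set.univ).Reachable u v :=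
  (latticeOn_reachable_horizontal (b := u.2) fun _ _ => Set.mem_univ _).trans
    (latticeOn_reachable_vertical (a := v.1) fun _ _ => Set.mem_univ _)

lemma latticeOn_compl_VN_reachable {M : ℕ} (hu : u ∉ VN M) (hv : v ∉ VN M) :
    (latticeOn (VN M)ᶜ).Reachable u v := by
  suffices ∀ u ∉ VN M, (latticeOn (VN M)ᶜ).Reachable u (M + 1, M + 1) from
    (this u hu).trans (this v hv).symm
  intro u hu
  simp only [VN, Set.mem_ofPred_eq, not_and_or, not_le] at hu
  have hfar : ∀ w : ℤ × ℤ, M < |w.1| ∨ M < |w.2| → w ∈ (VN M)ᶜ := fun w hw hw' => by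
    rcases hw with hw | hw
    · exact hw.not_ge hw'.1
    · exact hw.not_ge hw'.2
  rcases hu with hu | hu
  · exact (latticeOn_reachable_vertical fun _ _ => hfar _ (.inl hu)).trans
      (latticeOn_reachable_horizontal fun _ _ => hfar _ (.inr (lt_abs.mpr (.inl (by omega)))))
  · exact (latticeOn_reachable_horizontal fun _ _ => hfar _ (.inr hu)).trans
      (latticeOn_reachable_vertical fun _ _ => hfar _ (.inl (lt_abs.mpr (.inl (by omega)))))

lemma exists_adj_of_reachable_of_notMem {v u : ℤ × ℤ}
    (h : (latticeOn Set.univ).Reachable v u) (hv : v ∉ T) (hu : u ∈ T) :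
    ∃ b ∉ T, ∃ a ∈ T, (latticeOn Set.univ).Adj b a ∧ (latticeOn Tᶜ).Reachable v b := by
  obtain ⟨p⟩ := h
  induction p with
  | nil => exact absurd hu hv
  | @cons v w u hvw p ih =>
    by_cases hw : w ∈ T
    · exact ⟨v, hv, w, hw, hvw, .rfl⟩
    · obtain ⟨b, hb, a, ha, hba, hwb⟩ := ih hw hu
      exact ⟨b, hb, a, ha, hba, (latticeOn_adj_iff.mpr ⟨hvw, hv, hw⟩).reachable.trans hwb⟩

end latticeOn

lemma Surrounds.mono {γ : Finset LatticeEdge} {X Y : Set (ℤ × ℤ)} (h : Surrounds γ Y)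
    (hXY : X ⊆ Y) : Surrounds γ X :=
  ⟨h.1, h.2.imp fun _ hC => ⟨hC.1, hXY.trans hC.2⟩⟩

open SimpleGraph in
lemma surrounds_of_component {γ : Finset LatticeEdge} {D : (complGraph γ).ConnectedComponent}
    (hD : D.supp.Finite) (hout : ∀ u ∉ D.supp, ∀ v ∉ D.supp, (complGraph γ).Reachable u v)
    (hγ : ∀ e ∈ γ, ∃ u ∈ D.supp, ∃ w ∉ D.supp, e.ends = s(u, w))
    {X : Set (ℤ × ℤ)} (hX : X ⊆ D.supp) : Surrounds γ X := by
  have hinf : ∀ {G : SimpleGraph (ℤ × ℤ)} (C : G.ConnectedComponent),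
      (∀ w ∉ D.supp, G.Reachable w C.out) → ¬ C.supp.Finite := fun C hC hfin =>
    hD.infinite_compl (hfin.subset fun w hw => (ConnectedComponent.sound (hC w hw)).trans C.out_eq)
  refine ⟨⟨⟨D, hD, fun C hC => ?_⟩, fun e he C => hinf C fun w _ => ?_⟩, D, hD, hX⟩
  · by_contra hCD
    have hout' : C.out ∉ D.supp := fun h => hCD (ConnectedComponent.eq_of_common_vertex C.out_eq h)
    exact hinf C (fun w hw => hout w hw _ hout') hC
  · obtain ⟨u, hu, w', hw', hends⟩ := hγ e he
    have hle : complGraph γ ≤ graphOf {f | f ∉ γ ∨ f = e} := graphOf_mono fun _ => .inl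
    have hall : ∀ v, (graphOf {f | f ∉ γ ∨ f = e}).Reachable v w' := fun v => by
      by_cases hv : v ∈ D.supp
      · exact ((D.reachable_of_mem_supp hv hu).mono hle).trans
          (graphOf_adj_of_ends (.inr rfl) hends).reachable
      · exact (hout v hv w' hw').mono hle
    exact (hall w).trans (hall _).symm

/-- For `c` far from a finite `A`, the unbounded component of the complement of `A`. -/
def outside (A : Set (ℤ × ℤ)) (c : ℤ × ℤ) : Set (ℤ × ℤ) :=
  {v | (latticeOn Aᶜ).Reachable v c}

def outerBoundary (A : Set (ℤ × ℤ)) (c : ℤ × ℤ) : Set LatticeEdge :=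
  {e | ∃ u ∈ A, ∃ w ∈ outside A c, e.ends = s(u, w)}

section outside

variable {A : Set (ℤ × ℤ)} {c u v : ℤ × ℤ}

lemma outside_subset_compl (hc : c ∉ A) : outside A c ⊆ Aᶜ :=
  fun _ hv => mem_of_latticeOn_reachable hv.symm hc

lemma mem_outside_of_adj (hu : u ∈ outside A c) (hv : v ∉ A)
    (huv : (latticeOn Set.univ).Adj u v) (hc : c ∉ A) : v ∈ outside A c :=
  (latticeOn_adj_iff.mpr ⟨huv.symm, hv, outside_subset_compl hc hu⟩).reachable.trans hu

lemma finite_outerBoundary (hA : A.Finite) : (outerBoundary A c).Finite :=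
  (LatticeEdge.finite_setOf_touching hA).subset fun _ ⟨u, hu, _, _, hends⟩ => by
    rcases LatticeEdge.ends_eq_iff.mp hends with ⟨h, -⟩ | ⟨-, h⟩
    · exact .inl (h ▸ hu)
    · exact .inr (h ▸ hu)

variable {γ : Finset LatticeEdge}

lemma latticeOn_compl_le_complGraph (hγ : (γ : Set LatticeEdge) = outerBoundary A c) :
    latticeOn Aᶜ ≤ complGraph γ := by
  refine latticeOn_le_complGraph fun e he => ?_
  obtain ⟨u, hu, _, _, hends⟩ := hγ ▸ Finset.mem_coe.mpr he
  rcases LatticeEdge.ends_eq_iff.mp hends with ⟨h, -⟩ | ⟨-, h⟩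
  · exact .inl (not_not.mpr (h ▸ hu))
  · exact .inr (not_not.mpr (h ▸ hu))

lemma latticeOn_compl_outside_le_complGraph (hγ : (γ : Set LatticeEdge) = outerBoundary A c) :
    latticeOn (outside A c)ᶜ ≤ complGraph γ := by
  refine latticeOn_le_complGraph fun e he => ?_
  obtain ⟨_, _, w, hw, hends⟩ := hγ ▸ Finset.mem_coe.mpr he
  rcases LatticeEdge.ends_eq_iff.mp hends with ⟨-, h⟩ | ⟨h, -⟩
  · exact .inr (not_not.mpr (h ▸ hw))
  · exact .inl (not_not.mpr (h ▸ hw))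

lemma notMem_outside_of_complGraph_adj (hγ : (γ : Set LatticeEdge) = outerBoundary A c) (hc : c ∉ A)
    (hu : u ∉ outside A c) (huv : (complGraph γ).Adj u v) : v ∉ outside A c := by
  intro hv
  by_cases huA : u ∈ A
  · obtain ⟨-, e, heγ, hends⟩ := huv
    exact heγ (hγ ▸ ⟨u, huA, v, hv, hends⟩ : e ∈ (γ : Set LatticeEdge))
  · exact hu (mem_outside_of_adj hv huA (graphOf_le_latticeOn_univ _ huv).symm hc)

lemma complGraph_reachable_of_notMem_outside (hγ : (γ : Set LatticeEdge) = outerBoundary A c)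
    (hc : c ∉ A) {x : ℤ × ℤ} (hx : x ∈ A) (hconn : ∀ a ∈ A, (latticeOn A).Reachable x a)
    (hv : v ∉ outside A c) : (complGraph γ).Reachable x v := by
  have hAo : A ⊆ (outside A c)ᶜ := Set.subset_compl_comm.mp (outside_subset_compl hc)
  have hxA : ∀ a ∈ A, (complGraph γ).Reachable x a := fun a ha =>
    ((hconn a ha).mono (latticeOn_mono hAo)).mono (latticeOn_compl_outside_le_complGraph hγ)
  by_cases hvA : v ∈ A
  · exact hxA v hvA
  obtain ⟨b, hb, a, ha, hba, hvb⟩ :=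
    exists_adj_of_reachable_of_notMem (latticeOn_univ_reachable v x) hvA hx
  have hbo : b ∉ outside A c := fun hbo => hv (hvb.trans hbo)
  have hba' : (complGraph γ).Adj b a :=
    latticeOn_compl_outside_le_complGraph hγ (latticeOn_adj_iff.mpr ⟨hba, hbo, hAo ha⟩)
  exact ((hxA a ha).trans hba'.symm.reachable).trans
    (hvb.mono (latticeOn_compl_le_complGraph hγ)).symm

end outside

open SimpleGraph in
theorem exists_surrounds_of_finite {A : Set (ℤ × ℤ)} (hA : A.Finite) {x : ℤ × ℤ} (hx : x ∈ A)
    (hconn : ∀ a ∈ A, (latticeOn A).Reachable x a) :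
    ∃ γ : Finset LatticeEdge, Surrounds γ A ∧ ∀ e ∈ γ, ∃ u ∈ A, ∃ w ∉ A, e.ends = s(u, w) := by
  obtain ⟨M, hAM⟩ := exists_subset_VN hA
  set c : ℤ × ℤ := (M + 1, M + 1)
  have hcM : c ∉ VN M := fun h => by
    have : |(M + 1 : ℤ)| ≤ M := h.1
    rw [abs_of_nonneg (by positivity)] at this
    omega
  have hc : c ∉ A := fun h => hcM (hAM h)
  have hfar : (VN M)ᶜ ⊆ outside A c := fun v hv =>
    (latticeOn_compl_VN_reachable hv hcM).mono (latticeOn_mono (Set.compl_subset_compl.mpr hAM))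
  set γ := (finite_outerBoundary (c := c) hA).toFinset
  have hγ : (γ : Set LatticeEdge) = outerBoundary A c := Set.Finite.coe_toFinset _
  set D := (complGraph γ).connectedComponentMk x
  have hD : D.supp = (outside A c)ᶜ := by
    ext v
    refine ⟨fun hv => ?_, fun hv => ConnectedComponent.sound
      (complGraph_reachable_of_notMem_outside hγ hc hx hconn hv).symm⟩
    exact (D.reachable_of_mem_supp rfl hv).mem_of_adj_mem
      (fun _ _ => notMem_outside_of_complGraph_adj hγ hc) fun h => outside_subset_compl hc h hx
  have hedges : ∀ e ∈ γ, ∃ u ∈ A, ∃ w ∈ outside A c, e.ends = s(u, w) := fun e he =>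
    (hγ ▸ Finset.mem_coe.mpr he : e ∈ outerBoundary A c)
  have hAD : A ⊆ D.supp := hD ▸ Set.subset_compl_comm.mp (outside_subset_compl hc)
  refine ⟨γ, surrounds_of_component (D := D) ?_ (fun u hu v hv => ?_) (fun e he => ?_) hAD,
    fun e he => ?_⟩
  · rw [hD]
    exact (finite_VN M).subset (Set.compl_subset_comm.mp hfar)
  · rw [hD, Set.notMem_compl_iff] at hu hv
    exact (hu.mono (latticeOn_compl_le_complGraph hγ)).trans
      (hv.mono (latticeOn_compl_le_complGraph hγ)).symm
  · obtain ⟨u, hu, w, hw, hends⟩ := hedges e he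
    exact ⟨u, hAD hu, w, hD ▸ Set.notMem_compl_iff.mpr hw, hends⟩
  · obtain ⟨u, hu, w, hw, hends⟩ := hedges e he
    exact ⟨u, hu, w, outside_subset_compl hc hw, hends⟩

section cluster

variable {N : ℕ} {ω : LatticeEdge → Bool} {u v : ℤ × ℤ}

lemma mem_VN_of_openGraphN_reachable (h : (openGraphN N ω).Reachable u v) (hu : u ∈ VN N) :
    v ∈ VN N :=
  h.mem_of_adj_mem (fun _ _ _ hab => by
    obtain ⟨e, ⟨hbox, -⟩, ⟨-, rfl⟩ | ⟨rfl, -⟩⟩ := exists_of_graphOf_adj hab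
    exacts [hbox.2, hbox.1]) hu

lemma supp_subset_VN_diff_intBdry (C : (openGraphN N ω).ConnectedComponent) (hu : u ∈ C.supp)
    (huN : u ∈ VN N) (hC : C.supp ∩ intBdry N = ∅) : C.supp ⊆ VN N \ intBdry N :=
  fun _ hv => ⟨mem_VN_of_openGraphN_reachable (C.reachable_of_mem_supp hu hv) huN,
    fun hb => hC.subset ⟨hv, hb⟩⟩

lemma latticeOn_supp_reachable (C : (openGraphN N ω).ConnectedComponent) (hu : u ∈ C.supp)
    (hv : v ∈ C.supp) :
    (latticeOn C.supp).Reachable u v :=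
  (C.reachable_toSimpleGraph hu hv).map
    ⟨Subtype.val, fun {a b} hab => latticeOn_adj_iff.mpr
      ⟨graphOf_le_latticeOn_univ _ hab, a.2, b.2⟩⟩

lemma eq_false_of_mem_supp_of_notMem_supp (C : (openGraphN N ω).ConnectedComponent)
    (hCN : C.supp ⊆ VN N \ intBdry N) {e : LatticeEdge} {w : ℤ × ℤ}
    (hu : u ∈ C.supp) (hw : w ∉ C.supp) (hends : e.ends = s(u, w)) : ω e = false := by
  rw [Bool.eq_false_iff]
  intro hopen
  have hbox : edgeInBox N e := by
    refine LatticeEdge.edgeInBox_of_mem ?_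
    rcases LatticeEdge.ends_eq_iff.mp hends with ⟨h, -⟩ | ⟨-, h⟩
    · exact .inl (h ▸ hCN hu)
    · exact .inr (h ▸ hCN hu)
  exact hw (C.mem_supp_of_adj_mem_supp hu (graphOf_adj_of_ends ⟨hbox, hopen⟩ hends))

end cluster

lemma exists_closed_contour_of_finiteVolEvent {N : ℕ} {x y : ℤ × ℤ} {ω : LatticeEdge → Bool}
    (hx : x ∈ VN N) (hE : FiniteVolEvent N x y ω) :
    ∃ γ : Finset LatticeEdge, Surrounds γ {x, y} ∧ ∀ e ∈ γ, ω e = false := by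
  obtain ⟨C, hxC, hyC, hC⟩ := hE
  have hCN := supp_subset_VN_diff_intBdry C hxC hx hC
  obtain ⟨γ, hγ, hedges⟩ := exists_surrounds_of_finite
    ((finite_VN N).subset fun v hv => (hCN hv).1) hxC fun a ha => latticeOn_supp_reachable C hxC ha
  refine ⟨γ, hγ.mono (Set.insert_subset hxC (Set.singleton_subset_iff.mpr hyC)), fun e he => ?_⟩
  obtain ⟨u, hu, w, hw, hends⟩ := hedges e he
  exact eq_false_of_mem_supp_of_notMem_supp C hCN hu hw hends

lemma measure_forall_eq_false {ph pv : ℝ} {P : Measure (LatticeEdge → Bool)}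
    (hP : IsBernoulliProduct ph pv P) (γ : Finset LatticeEdge) :
    P {ω | ∀ e ∈ γ, ω e = false} =
      ENNReal.ofReal (1 - ph) ^ hCount γ * ENNReal.ofReal (1 - pv) ^ vCount γ := by
  rw [hP.2 γ fun _ => false]
  simp only [Bool.false_eq_true, if_false, edgeProb, apply_ite, Finset.prod_ite,
    Finset.prod_const, hCount, vCount, Bool.not_eq_true]

lemma one_sub_le_lam {p : ℝ} (hp : 0 < p) : 1 - p ≤ lam p := by
  rw [lam, le_div_iff₀ hp]
  nlinarith [sq_nonneg (1 - p)]

theorem tauFN_peierls_bound_general (N : ℕ) (x y : ℤ × ℤ)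
    (hx : x ∈ VN N \ intBdry N)
    (ph pv : ℝ) (h1 : 0 < ph) (h3 : 0 < pv)
    (P : Measure (LatticeEdge → Bool)) (hP : IsBernoulliProduct ph pv P) :
    P {ω | FiniteVolEvent N x y ω} ≤
      ∑' γ : {γ : Finset LatticeEdge // Surrounds γ {x, y}},
        ENNReal.ofReal (lam ph) ^ hCount γ.1 * ENNReal.ofReal (lam pv) ^ vCount γ.1 := by
  calc P {ω | FiniteVolEvent N x y ω}
      ≤ P (⋃ γ : {γ : Finset LatticeEdge // Surrounds γ {x, y}},
          {ω | ∀ e ∈ γ.1, ω e = false}) := by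
        refine measure_mono fun ω hω => ?_
        obtain ⟨γ, hγ, hclosed⟩ := exists_closed_contour_of_finiteVolEvent hx.1 hω
        exact Set.mem_iUnion.mpr ⟨⟨γ, hγ⟩, hclosed⟩
    _ ≤ ∑' γ : {γ : Finset LatticeEdge // Surrounds γ {x, y}},
          P {ω | ∀ e ∈ γ.1, ω e = false} := measure_iUnion_le _
    _ ≤ _ := ENNReal.tsum_le_tsum fun γ => by
        rw [measure_forall_eq_false hP]
        gcongr
        exacts [one_sub_le_lam h1, one_sub_le_lam h3]

/-- Peierls bound. For `N ≥ 1`, `x, y ∈ V_N ∖ ∂_v^int V_N` and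
`p_h, p_v ∈ (0,1)`:
`τ^{f,N}_p(x,y) ≤ Σ_{γ ∈ Γ_{{x,y}}} λ_h^{|γ ∩ Eʰ|} λ_v^{|γ ∩ Eᵛ|}`. -/
theorem tauFN_peierls_bound (N : ℕ) (hN : 1 ≤ N) (x y : ℤ × ℤ)
    (hx : x ∈ VN N \ intBdry N) (hy : y ∈ VN N \ intBdry N)
    (ph pv : ℝ) (h1 : 0 < ph) (h2 : ph < 1) (h3 : 0 < pv) (h4 : pv < 1)
    (P : Measure (LatticeEdge → Bool)) (hP : IsBernoulliProduct ph pv P) :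
    P {ω | FiniteVolEvent N x y ω} ≤
      ∑' γ : {γ : Finset LatticeEdge // Surrounds γ {x, y}},
        ENNReal.ofReal (lam ph) ^ hCount γ.1 * ENNReal.ofReal (lam pv) ^ vCount γ.1 :=
  tauFN_peierls_bound_general N x y hx ph pv h1 h3 P hP
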